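/- arXiv:2011.14570 — 2 statements merged into one kernel-verified Lean document; each statement's English description precedes it below -/
import Mathlib

section
/- ε-IC to IC transformation: Let M = {(E_i, t_i)}_{i∈[k]} be a menu with nonnegative prices t_i ∈ [0,1] whose IC and IR constraints are violated by at most ε ∈ (0,1): for every buyer type θ in a finite type space Θ with distribution F, the experiment E_{σ(θ)} chosen by θ satisfies V_θ(E_{σ(θ)}) − t_{σ(θ)} ≥ V_θ(E_j) − t_j − ε for all j, and V_θ(E_{σ(θ)}) − t_{σ(θ)} ≥ u(θ) − ε, where u(θ) is the base utility. Define new prices t̃_i = (1−√ε)·t_i − ε. Then the menu M̃ = {(E_i, t̃_i)} is exactly IR, and under M̃ every type θ purchases (under exact utility maximization over M̃) an experiment whose original price differs from t_{σ(θ)} by at most √ε, so that the revenue of M̃ satisfies Rev(M̃) ≥ (1−√ε)·Rev(M) − √ε − ε, where Rev(M) = Σ_θ F(θ)·t_{σ(θ)}. -/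
open Finset

/-- ε-IC to IC transformation.  `V θ i` is the value of type `θ` for experiment `i`,
`t i` its price, `base θ` the base utility of type `θ`, `σ θ` the experiment chosen by
`θ` under the old prices, and `σ' θ` any exact best response under the new prices
`t̃ i = (1 - √ε) * t i - ε`. -/
theorem eps_IC_to_IC
    {Θ : Type*} [Fintype Θ] [Nonempty Θ] (k : ℕ) (hk : 0 < k)
    (F : Θ → ℝ) (hF : ∀ θ, 0 ≤ F θ) (hF1 : ∑ θ, F θ = 1)
    (V : Θ → Fin k → ℝ) (hV : ∀ θ i, 0 ≤ V θ i ∧ V θ i ≤ 1)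
    (t : Fin k → ℝ) (ht : ∀ i, 0 ≤ t i ∧ t i ≤ 1)
    (base : Θ → ℝ) (hbase : ∀ θ, 0 ≤ base θ ∧ base θ ≤ 1)
    (ε : ℝ) (hε : 0 < ε) (hε1 : ε < 1)
    (σ : Θ → Fin k)
    (hIC : ∀ θ j, V θ (σ θ) - t (σ θ) ≥ V θ j - t j - ε)
    (hIR : ∀ θ, V θ (σ θ) - t (σ θ) ≥ base θ - ε)
    (tnew : Fin k → ℝ) (htnew : ∀ i, tnew i = (1 - Real.sqrt ε) * t i - ε)
    (σ' : Θ → Fin k)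
    (hσ' : ∀ θ j, V θ (σ' θ) - tnew (σ' θ) ≥ V θ j - tnew j) :
    (∀ θ, V θ (σ' θ) - tnew (σ' θ) ≥ base θ) ∧
    (∀ θ, t (σ θ) - t (σ' θ) ≤ Real.sqrt ε) ∧
    (∑ θ, F θ * tnew (σ' θ)) ≥
      (1 - Real.sqrt ε) * (∑ θ, F θ * t (σ θ)) - Real.sqrt ε - ε := by
  set s := Real.sqrt ε with hsdef
  have hs0 : 0 < s := Real.sqrt_pos.mpr hε
  have hs2 : s * s = ε := Real.mul_self_sqrt hε.le
  have h2 : ∀ θ, t (σ θ) - t (σ' θ) ≤ s := by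
    intro θ
    have h1 := hσ' θ (σ θ)
    have h3 := hIC θ (σ' θ)
    rw [htnew, htnew] at h1
    nlinarith
  refine ⟨?_, h2, ?_⟩
  · intro θ
    have h1 := hσ' θ (σ θ)
    have h3 := hIR θ
    rw [htnew (σ θ)] at h1
    have ht0 := (ht (σ θ)).1
    nlinarith
  · have key : ∀ θ, F θ * ((1 - s) * t (σ θ) - s - ε) ≤ F θ * tnew (σ' θ) := by
      intro θ
      apply mul_le_mul_of_nonneg_left _ (hF θ)
      rw [htnew]
      have h := h2 θ
      have ht0 := (ht (σ' θ)).1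
      have ht1 := (ht (σ θ)).1
      nlinarith
    have hsum : ∑ θ, F θ * ((1 - s) * t (σ θ) - s - ε) ≤ ∑ θ, F θ * tnew (σ' θ) := Finset.sum_le_sum (fun θ _ => key θ)
    have heq : ∑ θ, F θ * ((1 - s) * t (σ θ) - s - ε)
        = (1 - s) * (∑ θ, F θ * t (σ θ)) - s - ε := by
      have : ∀ θ, F θ * ((1 - s) * t (σ θ) - s - ε)
          = (1 - s) * (F θ * t (σ θ)) - F θ * (s + ε) := by intro θ; ring
      simp_rw [this]
      rw [Finset.sum_sub_distrib, ← Finset.mul_sum, ← Finset.sum_mul, hF1]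
      ring
    rw [heq] at hsum
    exact hsum
end

section
/- In the SAT-reduction instance: let Φ be a CNF formula with m clauses over variables x1,…,xn, and let k = max_a z_a(Φ) be the maximum number of clauses of Φ satisfiable by any assignment a. Construct Φ_{ω1} = (C1∨y)∧…∧(Cm∨y)∧(x1∨y)∧(¬x1∨y) and Φ_{ω2} = (C1∨¬y)∧…∧(Cm∨¬y)∧(x1∨¬y)∧(¬x1∨¬y), each with m+2 clauses, and let the buyer with uniform prior (1/2, 1/2) over {ω1, ω2} have ex-post utility u(ω, a) equal to the fraction of clauses of Φ_ω satisfied by assignment a (a ranging over assignments of x1,…,xn,y). Then the buyer's base utility equals u(θ) = (m+k+3)/(2m+4), the value of the fully informative experiment equals 1, and therefore the optimal revenue V_θ(E*) − u(θ) equals (m−k+1)/(2m+4). -/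
open Finset

/-- The SAT-reduction instance.  A clause of `Φ` is modelled by its satisfaction
predicate `C i : (Fin n → Bool) → Bool`.  Assignments of the extended instance are
pairs `(a, y)`.  `z a` counts clauses of `Φ` satisfied by `a` and `k` is its maximum.
The utilities `u ω1`, `u ω2` are the fractions of satisfied clauses of
`Φ_{ω1} = ⋀ᵢ (Cᵢ ∨ y) ∧ (x₁ ∨ y) ∧ (¬x₁ ∨ y)` and
`Φ_{ω2} = ⋀ᵢ (Cᵢ ∨ ¬y) ∧ (x₁ ∨ ¬y) ∧ (¬x₁ ∨ ¬y)`.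
Under the uniform prior, the base utility is `(m+k+3)/(2m+4)`, the fully informative
experiment has value `1`, and the optimal revenue is `(m-k+1)/(2m+4)`. -/
theorem sat_reduction_instance
    (n m : ℕ) (hn : 0 < n) (hm : 0 < m)
    (C : Fin m → (Fin n → Bool) → Bool)
    (k : ℕ)
    (hk : k = univ.sup' univ_nonempty
      (fun a : Fin n → Bool => (univ.filter (fun i => C i a)).card))
    (u1 u2 : (Fin n → Bool) × Bool → ℝ)
    (hu1 : ∀ av : (Fin n → Bool) × Bool,
      u1 av = (((univ.filter (fun i => C i av.1 || av.2)).card : ℝ) +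
        (if av.1 ⟨0, hn⟩ || av.2 then 1 else 0) +
        (if !av.1 ⟨0, hn⟩ || av.2 then 1 else 0)) / (m + 2))
    (hu2 : ∀ av : (Fin n → Bool) × Bool,
      u2 av = (((univ.filter (fun i => C i av.1 || !av.2)).card : ℝ) +
        (if av.1 ⟨0, hn⟩ || !av.2 then 1 else 0) +
        (if !av.1 ⟨0, hn⟩ || !av.2 then 1 else 0)) / (m + 2)) :
    univ.sup' univ_nonempty
        (fun av : (Fin n → Bool) × Bool => (1 / 2) * u1 av + (1 / 2) * u2 av)
      = ((m : ℝ) + k + 3) / (2 * m + 4) ∧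
    (1 / 2) * univ.sup' univ_nonempty u1 + (1 / 2) * univ.sup' univ_nonempty u2
      = 1 ∧
    (1 / 2) * univ.sup' univ_nonempty u1 + (1 / 2) * univ.sup' univ_nonempty u2
      - univ.sup' univ_nonempty
          (fun av : (Fin n → Bool) × Bool => (1 / 2) * u1 av + (1 / 2) * u2 av)
      = ((m : ℝ) - k + 1) / (2 * m + 4) := by

  have hden : (0:ℝ) < (m:ℝ) + 2 := by positivity
  have hden2 : (0:ℝ) < 2*(m:ℝ) + 4 := by positivity
  set z : (Fin n → Bool) → ℕ := fun a => (univ.filter (fun i => C i a)).card with hz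
  have hzm : ∀ a, (z a : ℝ) ≤ m := by
    intro a
    have h := Finset.card_filter_le (univ : Finset (Fin m)) (fun i => C i a = true)
    rw [card_univ, Fintype.card_fin] at h
    exact_mod_cast h
  have hzk : ∀ a, (z a : ℝ) ≤ k := by
    intro a
    have : z a ≤ k := hk ▸ Finset.le_sup' _ (mem_univ a)
    exact_mod_cast this
  have hex : ∃ a, z a = k := by
    obtain ⟨a, -, ha⟩ := Finset.exists_mem_eq_sup' univ_nonempty
      (fun a : Fin n → Bool => (univ.filter (fun i => C i a)).card)
    exact ⟨a, by rw [hz, hk, ha]⟩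
  -- u1 at y = true equals 1
  have hu1t : ∀ a, u1 (a, true) = 1 := by
    intro a
    rw [hu1]
    simp only [Bool.or_true, if_true]
    rw [Finset.filter_true_of_mem (by simp)]
    simp only [card_univ, Fintype.card_fin]
    field_simp
    ring
  have hu2f : ∀ a, u2 (a, false) = 1 := by
    intro a
    rw [hu2]
    simp only [Bool.not_false, Bool.or_true, if_true]
    rw [Finset.filter_true_of_mem (by simp)]
    simp only [card_univ, Fintype.card_fin]
    field_simp
    ring
  have hu1f : ∀ a, u1 (a, false) = ((z a : ℝ) + 1) / (m + 2) := by
    intro a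
    rw [hu1]
    simp only [Bool.or_false]
    cases h : a ⟨0, hn⟩ <;> simp [h, hz]
  have hu2t : ∀ a, u2 (a, true) = ((z a : ℝ) + 1) / (m + 2) := by
    intro a
    rw [hu2]
    simp only [Bool.not_true, Bool.or_false]
    cases h : a ⟨0, hn⟩ <;> simp [h, hz]
  have hu1le : ∀ av, u1 av ≤ 1 := by
    intro av
    rw [hu1]
    rw [div_le_one hden]
    have h1 : ((univ.filter (fun i => C i av.1 || av.2)).card : ℝ) ≤ m := by
      have h := Finset.card_filter_le (univ : Finset (Fin m)) (fun i => (C i av.1 || av.2) = true)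
      rw [card_univ, Fintype.card_fin] at h
      exact_mod_cast h
    split_ifs <;> linarith
  have hu2le : ∀ av, u2 av ≤ 1 := by
    intro av
    rw [hu2]
    rw [div_le_one hden]
    have h1 : ((univ.filter (fun i => C i av.1 || !av.2)).card : ℝ) ≤ m := by
      have h := Finset.card_filter_le (univ : Finset (Fin m)) (fun i => (C i av.1 || !av.2) = true)
      rw [card_univ, Fintype.card_fin] at h
      exact_mod_cast h
    split_ifs <;> linarith
  have hsup1 : univ.sup' univ_nonempty u1 = 1 := by
    apply le_antisymm
    · exact Finset.sup'_le _ _ fun av _ => hu1le av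
    · have := Finset.le_sup' u1 (mem_univ ((fun _ => true : Fin n → Bool), true))
      rw [hu1t] at this
      exact this
  have hsup2 : univ.sup' univ_nonempty u2 = 1 := by
    apply le_antisymm
    · exact Finset.sup'_le _ _ fun av _ => hu2le av
    · have := Finset.le_sup' u2 (mem_univ ((fun _ => true : Fin n → Bool), false))
      rw [hu2f] at this
      exact this
  have key : ∀ av : (Fin n → Bool) × Bool,
      (1/2) * u1 av + (1/2) * u2 av = ((m:ℝ) + z av.1 + 3) / (2*m + 4) := by
    rintro ⟨a, y⟩
    cases y
    · rw [hu1f, hu2f]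
      field_simp
      ring
    · rw [hu1t, hu2t]
      field_simp
      ring
  have hsupg : univ.sup' univ_nonempty
      (fun av : (Fin n → Bool) × Bool => (1 / 2) * u1 av + (1 / 2) * u2 av)
      = ((m : ℝ) + k + 3) / (2 * m + 4) := by
    apply le_antisymm
    · apply Finset.sup'_le
      intro av _
      rw [key av]
      gcongr
      · have : z av.1 ≤ k := hk ▸ Finset.le_sup' _ (mem_univ av.1)
        omega
    · obtain ⟨a, ha⟩ := hex
      have := Finset.le_sup'
        (fun av : (Fin n → Bool) × Bool => (1 / 2) * u1 av + (1 / 2) * u2 av)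
        (mem_univ (a, true))
      rw [key (a, true)] at this
      simp only [ha] at this
      exact this
  refine ⟨hsupg, ?_, ?_⟩
  · rw [hsup1, hsup2]; norm_num
  · rw [hsup1, hsup2, hsupg]
    field_simp
    ring
end
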